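/- arXiv:2212.10243 — 3 statements merged into one kernel-verified Lean document; each statement's English description precedes it below -/
import Mathlib

section
/- If T is a polynomially Riesz operator on an infinite-dimensional complex Banach space X (i.e., there exists a nonzero complex polynomial p such that p(T) is a Riesz operator), then there exists a unique monic polynomial m of smallest degree such that m(T) is a Riesz operator, and m divides every polynomial p for which p(T) is a Riesz operator. -/
open Polynomial

/-- The essential spectrum of `T`: the set of `z : ℂ` such that `z - T` is not invertible
modulo compact operators (i.e. the spectrum of the image of `T` in the Calkin algebra). -/
noncomputable def essSpectrum {X : Type*} [NormedAddCommGroup X] [NormedSpace ℂ X]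
    (T : X →L[ℂ] X) : Set ℂ :=
  {z | ¬ ∃ S : X →L[ℂ] X,
      IsCompactOperator (⇑((z • (1 : X →L[ℂ] X) - T) * S - 1)) ∧
      IsCompactOperator (⇑(S * (z • (1 : X →L[ℂ] X) - T) - 1))}

/-- `T` is a Riesz operator: its image in the Calkin algebra is quasinilpotent,
equivalently its essential spectrum is contained in `{0}`. -/
noncomputable def IsRieszOp {X : Type*} [NormedAddCommGroup X] [NormedSpace ℂ X]
    (T : X →L[ℂ] X) : Prop :=
  essSpectrum T ⊆ {0}

section Calkin

variable (X : Type*) [NormedAddCommGroup X] [NormedSpace ℂ X]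

/-- The ideal of compact operators, as a submodule of `X →L[ℂ] X`. -/
noncomputable def calkinIdeal : Submodule ℂ (X →L[ℂ] X) :=
  compactOperator (RingHom.id ℂ) X X

variable {X}

lemma mem_calkinIdeal_iff {S : X →L[ℂ] X} :
    S ∈ calkinIdeal X ↔ IsCompactOperator ⇑S := Iff.rfl

lemma calkinIdeal.mul_mem_left (a : X →L[ℂ] X) {c : X →L[ℂ] X}
    (hc : c ∈ calkinIdeal X) : a * c ∈ calkinIdeal X := by
  rw [mem_calkinIdeal_iff] at hc ⊢
  exact hc.clm_comp a

lemma calkinIdeal.mul_mem_right (b : X →L[ℂ] X) {c : X →L[ℂ] X}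
    (hc : c ∈ calkinIdeal X) : c * b ∈ calkinIdeal X := by
  rw [mem_calkinIdeal_iff] at hc ⊢
  exact hc.comp_clm b

variable [CompleteSpace X]

instance : IsClosed ((calkinIdeal X : Set (X →L[ℂ] X))) :=
  isClosed_setOf_isCompactOperator

variable (X) in
/-- The Calkin algebra of `X`, as a quotient module. -/
abbrev Calkin : Type _ := (X →L[ℂ] X) ⧸ calkinIdeal X

noncomputable instance : Mul (Calkin X) where
  mul x y := Quotient.liftOn₂' x y
    (fun a b => Submodule.Quotient.mk (a * b)) (by
      intro a b a' b' ha hb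
      have ha' : (Submodule.Quotient.mk a : Calkin X) = Submodule.Quotient.mk a' :=
        Quotient.sound' ha
      have hb' : (Submodule.Quotient.mk b : Calkin X) = Submodule.Quotient.mk b' :=
        Quotient.sound' hb
      rw [Submodule.Quotient.eq] at ha' hb' ⊢
      have : a * b - a' * b' = a * (b - b') + (a - a') * b' := by
        rw [mul_sub, sub_mul]; abel
      rw [this]
      exact (calkinIdeal X).add_mem (calkinIdeal.mul_mem_left a hb')
        (calkinIdeal.mul_mem_right b' ha'))

noncomputable instance : One (Calkin X) := ⟨Submodule.Quotient.mk 1⟩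

lemma calkin_mk_mul (a b : X →L[ℂ] X) :
    (Submodule.Quotient.mk a : Calkin X) * Submodule.Quotient.mk b =
      Submodule.Quotient.mk (a * b) := rfl

lemma calkin_mk_one : (1 : Calkin X) = Submodule.Quotient.mk 1 := rfl

noncomputable instance : Ring (Calkin X) :=
  { (inferInstance : AddCommGroup (Calkin X)) with
    mul := (· * ·)
    one := 1
    mul_assoc := fun x y z => Quotient.inductionOn₃' x y z fun a b c => by
      show (Submodule.Quotient.mk a : Calkin X) * Submodule.Quotient.mk b *
        Submodule.Quotient.mk c = _
      simp only [calkin_mk_mul, mul_assoc]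
      rfl
    one_mul := fun x => Quotient.inductionOn' x fun a => by
      show (1 : Calkin X) * Submodule.Quotient.mk a = Submodule.Quotient.mk a
      rw [calkin_mk_one, calkin_mk_mul, one_mul]
    mul_one := fun x => Quotient.inductionOn' x fun a => by
      show Submodule.Quotient.mk a * (1 : Calkin X) = Submodule.Quotient.mk a
      rw [calkin_mk_one, calkin_mk_mul, mul_one]
    left_distrib := fun x y z => Quotient.inductionOn₃' x y z fun a b c => by
      show (Submodule.Quotient.mk a : Calkin X) *
        (Submodule.Quotient.mk b + Submodule.Quotient.mk c) = _
      rw [← Submodule.Quotient.mk_add, calkin_mk_mul, mul_add, Submodule.Quotient.mk_add]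
      rfl
    right_distrib := fun x y z => Quotient.inductionOn₃' x y z fun a b c => by
      show ((Submodule.Quotient.mk a : Calkin X) + Submodule.Quotient.mk b) *
        Submodule.Quotient.mk c = _
      rw [← Submodule.Quotient.mk_add, calkin_mk_mul, add_mul, Submodule.Quotient.mk_add]
      rfl
    zero_mul := fun x => Quotient.inductionOn' x fun a => by
      show (Submodule.Quotient.mk 0 : Calkin X) * Submodule.Quotient.mk a =
        Submodule.Quotient.mk 0
      rw [calkin_mk_mul, zero_mul]
    mul_zero := fun x => Quotient.inductionOn' x fun a => by
      show Submodule.Quotient.mk a * (Submodule.Quotient.mk 0 : Calkin X) =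
        Submodule.Quotient.mk 0
      rw [calkin_mk_mul, mul_zero] }

noncomputable instance : Algebra ℂ (Calkin X) :=
  Algebra.ofModule
    (fun r x y => Quotient.inductionOn₂' x y fun a b => by
      show (r • (Submodule.Quotient.mk a : Calkin X)) * Submodule.Quotient.mk b =
        r • ((Submodule.Quotient.mk a : Calkin X) * Submodule.Quotient.mk b)
      rw [← Submodule.Quotient.mk_smul, calkin_mk_mul, calkin_mk_mul,
        ← Submodule.Quotient.mk_smul, smul_mul_assoc])
    (fun r x y => Quotient.inductionOn₂' x y fun a b => by
      show (Submodule.Quotient.mk a : Calkin X) * (r • Submodule.Quotient.mk b) =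
        r • ((Submodule.Quotient.mk a : Calkin X) * Submodule.Quotient.mk b)
      rw [← Submodule.Quotient.mk_smul, calkin_mk_mul, calkin_mk_mul,
        ← Submodule.Quotient.mk_smul, mul_smul_comm])

noncomputable instance : NormedRing (Calkin X) :=
  { (inferInstance : NormedAddCommGroup (Calkin X)),
    (inferInstance : Ring (Calkin X)) with
    norm_mul_le := by
      intro x y
      refine le_of_forall_pos_le_add fun ε hε => ?_
      have hs : (0 : ℝ) < ‖x‖ + ‖y‖ + 1 := by positivity
      set δ : ℝ := min 1 (ε / (‖x‖ + ‖y‖ + 1)) with hδdef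
      have hδ : 0 < δ := lt_min one_pos (div_pos hε hs)
      have hδ1 : δ ≤ 1 := min_le_left _ _
      have hδs : δ * (‖x‖ + ‖y‖ + 1) ≤ ε := by
        rw [← le_div_iff₀ hs]; exact min_le_right _ _
      obtain ⟨a, rfl, ha⟩ := Submodule.Quotient.norm_mk_lt x hδ
      obtain ⟨b, rfl, hb⟩ := Submodule.Quotient.norm_mk_lt y hδ
      have h1 : ‖(Submodule.Quotient.mk a : Calkin X) * Submodule.Quotient.mk b‖ ≤ ‖a‖ * ‖b‖ := by
        rw [calkin_mk_mul]
        exact (Submodule.Quotient.norm_mk_le _ _).trans (norm_mul_le a b)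
      have h2 : ‖a‖ * ‖b‖ ≤ (‖(Submodule.Quotient.mk a : Calkin X)‖ + δ) *
          (‖(Submodule.Quotient.mk b : Calkin X)‖ + δ) :=
        mul_le_mul ha.le hb.le (norm_nonneg b) (by positivity)
      nlinarith [h1, h2, hδ.le, hδ1, hδs, norm_nonneg a, norm_nonneg b] }

noncomputable instance : NormedAlgebra ℂ (Calkin X) :=
  { (inferInstance : Algebra ℂ (Calkin X)) with
    norm_smul_le := fun r x => norm_smul_le r x }

/-- The quotient map onto the Calkin algebra, as an algebra homomorphism. -/
noncomputable def calkinMk : (X →L[ℂ] X) →ₐ[ℂ] Calkin X where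
  toFun := Submodule.Quotient.mk
  map_one' := rfl
  map_mul' a b := (calkin_mk_mul a b).symm
  map_zero' := rfl
  map_add' a b := Submodule.Quotient.mk_add _
  commutes' r := by
    show Submodule.Quotient.mk (algebraMap ℂ (X →L[ℂ] X) r) = algebraMap ℂ (Calkin X) r
    rw [Algebra.algebraMap_eq_smul_one, Algebra.algebraMap_eq_smul_one,
      calkin_mk_one, ← Submodule.Quotient.mk_smul]

lemma calkin_nontrivial (hinf : ¬ FiniteDimensional ℂ X) : Nontrivial (Calkin X) := by
  refine nontrivial_of_ne 1 0 fun h => hinf ?_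
  rw [calkin_mk_one, Submodule.Quotient.mk_eq_zero, mem_calkinIdeal_iff] at h
  rw [ContinuousLinearMap.one_def, ContinuousLinearMap.coe_id'] at h
  obtain ⟨K, hK, hKm⟩ := h
  rw [Set.preimage_id] at hKm
  obtain ⟨r, hr, hball⟩ := Metric.mem_nhds_iff.mp hKm
  have hsub : Metric.closedBall (0 : X) (r / 2) ⊆ K :=
    (Metric.closedBall_subset_ball (by linarith)).trans hball
  have hc : IsCompact (Metric.closedBall (0 : X) (r / 2)) :=
    hK.of_isClosed_subset Metric.isClosed_closedBall hsub
  exact FiniteDimensional.of_isCompact_closedBall ℂ (by positivity) hc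

lemma essSpectrum_eq (S : X →L[ℂ] X) :
    essSpectrum S = spectrum ℂ (calkinMk (X := X) S) := by
  have halg : ∀ z : ℂ, algebraMap ℂ (Calkin X) z - calkinMk (X := X) S =
      Submodule.Quotient.mk (z • (1 : X →L[ℂ] X) - S) := by
    intro z
    rw [Submodule.Quotient.mk_sub, Algebra.algebraMap_eq_smul_one, calkin_mk_one,
      ← Submodule.Quotient.mk_smul]
    rfl
  ext z
  rw [spectrum.mem_iff]
  show (¬ _) ↔ ¬ _
  apply not_congr
  constructor
  · rintro ⟨W, h1, h2⟩
    rw [← mem_calkinIdeal_iff, ← Submodule.Quotient.mk_eq_zero,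
      Submodule.Quotient.mk_sub, sub_eq_zero] at h1 h2
    refine ⟨⟨algebraMap ℂ (Calkin X) z - calkinMk (X := X) S,
      Submodule.Quotient.mk W, ?_, ?_⟩, rfl⟩
    · rw [halg, calkin_mk_mul, h1, ← calkin_mk_one]
    · rw [halg, calkin_mk_mul, h2, ← calkin_mk_one]
  · rintro hu
    rw [halg] at hu
    obtain ⟨v, hv⟩ := hu
    obtain ⟨W, hW⟩ := Submodule.Quotient.mk_surjective (calkinIdeal X) (↑v⁻¹ : Calkin X)
    refine ⟨W, ?_, ?_⟩
    · rw [← mem_calkinIdeal_iff, ← Submodule.Quotient.mk_eq_zero,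
        Submodule.Quotient.mk_sub, sub_eq_zero, ← calkin_mk_mul, hW, ← calkin_mk_one, ← hv]
      exact v.mul_inv
    · rw [← mem_calkinIdeal_iff, ← Submodule.Quotient.mk_eq_zero,
        Submodule.Quotient.mk_sub, sub_eq_zero, ← calkin_mk_mul, hW, ← calkin_mk_one, ← hv]
      exact v.inv_mul

lemma isRieszOp_iff (S : X →L[ℂ] X) :
    IsRieszOp S ↔ spectrum ℂ (calkinMk (X := X) S) ⊆ {0} := by
  rw [IsRieszOp, essSpectrum_eq]

end Calkin

/-- If `T` is a polynomially Riesz operator on an infinite-dimensional complex Banach space,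
then there exists a unique monic polynomial `m` of smallest degree such that `m(T)` is a Riesz
operator, and `m` divides every polynomial `p` for which `p(T)` is a Riesz operator. -/
theorem minimal_polynomial_of_polynomially_riesz
    {X : Type*} [NormedAddCommGroup X] [NormedSpace ℂ X] [CompleteSpace X]
    (T : X →L[ℂ] X)
    (hinf : ¬ FiniteDimensional ℂ X)
    (hpoly : ∃ p : ℂ[X], p ≠ 0 ∧ IsRieszOp (aeval T p)) :
    ∃! m : ℂ[X], m.Monic ∧ IsRieszOp (aeval T m) ∧
      (∀ q : ℂ[X], q.Monic → IsRieszOp (aeval T q) → m.degree ≤ q.degree) ∧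
      (∀ p : ℂ[X], IsRieszOp (aeval T p) → m ∣ p) := by
  haveI : Nontrivial (Calkin X) := calkin_nontrivial hinf
  set a : Calkin X := calkinMk (X := X) T with ha
  have hne : (spectrum ℂ a).Nonempty := spectrum.nonempty a
  have key : ∀ p : ℂ[X], IsRieszOp (aeval T p) ↔ ∀ z ∈ spectrum ℂ a, p.eval z = 0 := by
    intro p
    rw [isRieszOp_iff, ← Polynomial.aeval_algHom_apply, ← ha,
      spectrum.map_polynomial_aeval_of_nonempty a p hne]
    constructor
    · intro h z hz
      exact h ⟨z, hz, rfl⟩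
    · rintro h w ⟨z, hz, rfl⟩
      exact h z hz
  obtain ⟨p, hp0, hpR⟩ := hpoly
  have hfin : (spectrum ℂ a).Finite :=
    (Polynomial.finite_setOf_isRoot hp0).subset fun z hz => (key p).mp hpR z hz
  set F : Finset ℂ := hfin.toFinset with hF
  set m : ℂ[X] := ∏ z ∈ F, (Polynomial.X - C z) with hm
  have hmonic : m.Monic := monic_prod_of_monic _ _ fun z _ => monic_X_sub_C z
  have hmr : IsRieszOp (aeval T m) := by
    rw [key]
    intro z hz
    rw [hm, eval_prod]
    exact Finset.prod_eq_zero (hfin.mem_toFinset.mpr hz) (by simp)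
  have hdvd : ∀ p : ℂ[X], IsRieszOp (aeval T p) → m ∣ p := by
    intro p hp
    have hroots := (key p).mp hp
    refine Finset.prod_dvd_of_coprime ?_ fun z hz => ?_
    · exact ((Polynomial.pairwise_coprime_X_sub_C
        (Function.injective_id (α := ℂ))).set_pairwise _)
    · exact dvd_iff_isRoot.mpr (hroots z (hfin.mem_toFinset.mp hz))
  refine ⟨m, ⟨hmonic, hmr, fun q hq hqR =>
    Polynomial.degree_le_of_dvd (hdvd q hqR) hq.ne_zero, hdvd⟩, ?_⟩
  rintro m' ⟨hm'monic, hm'R, _, hm'dvd⟩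
  exact Polynomial.eq_of_monic_of_associated hm'monic hmonic
    (associated_of_dvd_dvd (hm'dvd m hmr) (hdvd m' hm'R))
end

section
/- Let E be an order complete vector lattice, φ ∈ E_n~ a strictly positive order continuous functional, and set ‖x‖_φ := φ(|x|). Then the norm completion Ẽ of (E, ‖·‖_φ) is an AL-space in which E embeds as an order dense ideal; moreover, if E is atomless then Ẽ is atomless. -/
/-- `a` is an atom of the lattice `E`. -/
def IsAtomVL {E : Type*} [Lattice E] [AddCommGroup E] (a : E) : Prop :=
  0 < a ∧ ∀ x y : E, 0 ≤ x → 0 ≤ y → x ≤ a → y ≤ a → x ⊓ y = 0 → x = 0 ∨ y = 0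

section Aux

variable {E : Type*} [Lattice E] [AddCommGroup E]
    [CovariantClass E E (· + ·) (· ≤ ·)] [Module ℝ E]

private lemma phi_mono (φ : E →ₗ[ℝ] ℝ) (hφpos : ∀ x : E, 0 ≤ x → 0 ≤ φ x)
    {p q : E} (h : p ≤ q) : φ p ≤ φ q := by
  haveI : IsOrderedAddMonoid E :=
    { add_le_add_left := fun a b h c => by rw [add_comm a, add_comm b]; exact CovariantClass.elim c h }
  have := hφpos (q - p) (sub_nonneg.2 h)
  rw [map_sub] at this
  linarith

private lemma exists_isGLB
    (hcomplete : ∀ A : Set E, A.Nonempty → BddAbove A → ∃ b, IsLUB A b)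
    (A : Set E) (hne : A.Nonempty) (hbdd : BddBelow A) : ∃ a, IsGLB A a := by
  haveI : IsOrderedAddMonoid E :=
    { add_le_add_left := fun a b h c => by rw [add_comm a, add_comm b]; exact CovariantClass.elim c h }
  obtain ⟨y, hy⟩ := hne
  obtain ⟨c, hc⟩ := hbdd
  obtain ⟨b, hb⟩ := hcomplete (Neg.neg '' A) ⟨-y, y, hy, rfl⟩
    ⟨-c, by rintro _ ⟨z, hz, rfl⟩; exact neg_le_neg (hc hz)⟩
  refine ⟨-b, ?_, ?_⟩
  · intro z hz
    exact neg_le_of_neg_le (hb.1 ⟨z, hz, rfl⟩)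
  · intro d hd
    have : b ≤ -d := hb.2 (by rintro _ ⟨z, hz, rfl⟩; exact neg_le_neg (hd hz))
    exact le_neg_of_le_neg this

end Aux

section Est

variable {E : Type*} [Lattice E] [AddCommGroup E]
    [CovariantClass E E (· + ·) (· ≤ ·)] [Module ℝ E]

lemma sup_estimate
    (φ : E →ₗ[ℝ] ℝ) (hφpos : ∀ x : E, 0 ≤ x → 0 ≤ φ x)
    (hφcont : ∀ A : Set E, A.Nonempty → DirectedOn (· ≥ ·) A → IsGLB A 0 →
      ∀ ε : ℝ, 0 < ε → ∃ x ∈ A, |φ x| < ε)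
    (x : ℕ → E) (hc : ∀ n, φ |x (n+1) - x n| ≤ (2:ℝ)⁻¹ ^ n)
    (n : ℕ) (b : E) (hb : IsLUB {y | ∃ k, n ≤ k ∧ y = x k} b) :
    φ b ≤ φ (x n) + 2 * (2:ℝ)⁻¹ ^ n := by
  haveI : IsOrderedAddMonoid E :=
    { add_le_add_left := fun a b h c => by rw [add_comm a, add_comm b]; exact CovariantClass.elim c h }
  -- finite suprema
  set s : ℕ → E := fun m => Nat.rec (x n) (fun k sk => sk ⊔ x (n+k+1)) m with hs
  have hs0 : s 0 = x n := rfl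
  have hsS : ∀ m, s (m+1) = s m ⊔ x (n+m+1) := fun m => rfl
  set T : ℕ → E := fun m => ∑ i ∈ Finset.range m, (x (n+i+1) - x (n+i))⁺ with hT
  have hTmono : ∀ m, T m ≤ T (m+1) := by
    intro m
    rw [hT]
    simp only [Finset.sum_range_succ]
    exact le_add_of_nonneg_right (posPart_nonneg _)
  have hxT : ∀ k, x (n+k) ≤ x n + T k := by
    intro k
    induction k with
    | zero => simp [hT]
    | succ k ih =>
      have : x (n+k+1) = x (n+k) + (x (n+k+1) - x (n+k)) := by abel
      rw [show n + (k+1) = n+k+1 from rfl, this]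
      calc x (n+k) + (x (n+k+1) - x (n+k))
          ≤ (x n + T k) + (x (n+k+1) - x (n+k))⁺ :=
            add_le_add ih (le_posPart _)
        _ = x n + T (k+1) := by rw [hT]; simp [Finset.sum_range_succ]; abel
  have hsT : ∀ m, s m ≤ x n + T m := by
    intro m
    induction m with
    | zero => simpa [hs0, hT] using le_add_of_nonneg_right le_rfl
    | succ m ih =>
      rw [hsS]
      exact sup_le (le_trans ih (add_le_add_right (hTmono m) _)) (hxT (m+1))
  have hφT : ∀ m, φ (T m) ≤ 2 * (2:ℝ)⁻¹ ^ n := by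
    intro m
    rw [hT, map_sum]
    have step : ∀ i ∈ Finset.range m, φ ((x (n+i+1) - x (n+i))⁺) ≤ (2:ℝ)⁻¹ ^ (n+i) := by
      intro i _
      refine le_trans (phi_mono φ hφpos ?_) (hc (n+i))
      rw [posPart_def]
      exact sup_le (le_abs_self _) (abs_nonneg _)
    calc ∑ i ∈ Finset.range m, φ ((x (n+i+1) - x (n+i))⁺)
        ≤ ∑ i ∈ Finset.range m, (2:ℝ)⁻¹ ^ (n+i) := Finset.sum_le_sum step
      _ = (2:ℝ)⁻¹ ^ n * ∑ i ∈ Finset.range m, (2:ℝ)⁻¹ ^ i := by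
          rw [Finset.mul_sum]; exact Finset.sum_congr rfl fun i _ => pow_add _ _ _
      _ ≤ (2:ℝ)⁻¹ ^ n * 2 := by
          refine mul_le_mul_of_nonneg_left ?_ (by positivity)
          simpa [one_div] using sum_geometric_two_le m
      _ = 2 * (2:ℝ)⁻¹ ^ n := by ring
  have hsb : ∀ m, s m ≤ b := by
    intro m
    induction m with
    | zero => exact hb.1 ⟨n, le_rfl, rfl⟩
    | succ m ih => exact sup_le ih (hb.1 ⟨n+m+1, by omega, rfl⟩)
  have hsx : ∀ m, x (n+m) ≤ s m := by
    intro m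
    cases m with
    | zero => exact le_of_eq rfl
    | succ m => rw [hsS]; exact le_sup_right.trans (le_of_eq (by rw [show n+(m+1) = n+m+1 from rfl]))
  have hsmono : Monotone s := monotone_nat_of_le_succ (fun m => by rw [hsS]; exact le_sup_left)
  -- order continuity
  set A : Set E := {p | ∃ m, p = b - s m} with hA
  have hAne : A.Nonempty := ⟨b - s 0, 0, rfl⟩
  have hAdir : DirectedOn (· ≥ ·) A := by
    rintro _ ⟨m₁, rfl⟩ _ ⟨m₂, rfl⟩
    exact ⟨b - s (max m₁ m₂), ⟨max m₁ m₂, rfl⟩,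
      sub_le_sub_left (hsmono (le_max_left _ _)) b,
      sub_le_sub_left (hsmono (le_max_right _ _)) b⟩
  have hAglb : IsGLB A 0 := by
    constructor
    · rintro _ ⟨m, rfl⟩
      exact sub_nonneg.2 (hsb m)
    · intro c hcA
      have hub : b - c ∈ upperBounds {y | ∃ k, n ≤ k ∧ y = x k} := by
        rintro _ ⟨k, hk, rfl⟩
        obtain ⟨m, rfl⟩ : ∃ m, k = n + m := ⟨k - n, by omega⟩
        have h1 : c ≤ b - s m := hcA ⟨m, rfl⟩
        have h2 : s m ≤ b - c := by
          rw [le_sub_iff_add_le]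
          rw [le_sub_iff_add_le] at h1
          calc s m + c = c + s m := by abel
            _ ≤ b := h1
        exact (hsx m).trans h2
      have h := hb.2 hub
      have h2 : b + c ≤ b := le_sub_iff_add_le.1 h
      exact (add_le_iff_nonpos_right b).1 h2
  refine le_of_forall_pos_le_add ?_
  intro ε hε
  obtain ⟨_, ⟨m, rfl⟩, hp⟩ := hφcont A hAne hAdir hAglb ε hε
  have h0 : 0 ≤ φ (b - s m) := hφpos _ (sub_nonneg.2 (hsb m))
  rw [abs_of_nonneg h0, map_sub] at hp
  have h1 : φ (s m) ≤ φ (x n) + φ (T m) := by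
    have := phi_mono φ hφpos (hsT m)
    rwa [map_add] at this
  have h2 := hφT m
  linarith

end Est

section Key

variable {E : Type*} [Lattice E] [AddCommGroup E]
    [CovariantClass E E (· + ·) (· ≤ ·)] [Module ℝ E]

lemma key_convergence
    (hcomplete : ∀ A : Set E, A.Nonempty → BddAbove A → ∃ b, IsLUB A b)
    (φ : E →ₗ[ℝ] ℝ) (hφpos : ∀ x : E, 0 ≤ x → 0 ≤ φ x)
    (hφstrict : ∀ x : E, φ |x| = 0 → x = 0)
    (hφcont : ∀ A : Set E, A.Nonempty → DirectedOn (· ≥ ·) A → IsGLB A 0 →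
      ∀ ε : ℝ, 0 < ε → ∃ x ∈ A, |φ x| < ε)
    (w : E) (x : ℕ → E) (hx0 : ∀ n, 0 ≤ x n) (hxw : ∀ n, x n ≤ w)
    (hc : ∀ n, φ |x (n+1) - x n| ≤ (2:ℝ)⁻¹ ^ n) :
    ∃ v : E, ∀ n, φ |x n - v| ≤ 4 * (2:ℝ)⁻¹ ^ n := by
  haveI : IsOrderedAddMonoid E :=
    { add_le_add_left := fun a b h c => by rw [add_comm a, add_comm b]; exact CovariantClass.elim c h }
  set x' : ℕ → E := fun n => w - x n with hx'
  have hx'0 : ∀ n, 0 ≤ x' n := fun n => sub_nonneg.2 (hxw n)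
  have hx'w : ∀ n, x' n ≤ w := fun n => sub_le_self _ (hx0 n)
  have hc' : ∀ n, φ |x' (n+1) - x' n| ≤ (2:ℝ)⁻¹ ^ n := by
    intro n
    have : x' (n+1) - x' n = -(x (n+1) - x n) := by rw [hx']; beta_reduce; abel
    rw [this, abs_neg]
    exact hc n
  -- suprema of tails
  have hbEx : ∀ n, ∃ bn, IsLUB {y | ∃ k, n ≤ k ∧ y = x k} bn := fun n =>
    hcomplete _ ⟨x n, n, le_rfl, rfl⟩ ⟨w, by rintro _ ⟨k, _, rfl⟩; exact hxw k⟩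
  choose b hb using hbEx
  have hb'Ex : ∀ n, ∃ bn, IsLUB {y | ∃ k, n ≤ k ∧ y = x' k} bn := fun n =>
    hcomplete _ ⟨x' n, n, le_rfl, rfl⟩ ⟨w, by rintro _ ⟨k, _, rfl⟩; exact hx'w k⟩
  choose b' hb' using hb'Ex
  have est : ∀ n, φ (b n) ≤ φ (x n) + 2 * (2:ℝ)⁻¹ ^ n := fun n =>
    sup_estimate φ hφpos hφcont x hc n (b n) (hb n)
  have est' : ∀ n, φ (b' n) ≤ φ (x' n) + 2 * (2:ℝ)⁻¹ ^ n := fun n =>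
    sup_estimate φ hφpos hφcont x' hc' n (b' n) (hb' n)
  -- infima of the b's
  obtain ⟨v, hv⟩ := exists_isGLB hcomplete (Set.range b) ⟨b 0, 0, rfl⟩
    ⟨0, by rintro _ ⟨n, rfl⟩; exact le_trans (hx0 n) ((hb n).1 ⟨n, le_rfl, rfl⟩)⟩
  obtain ⟨v', hv'⟩ := exists_isGLB hcomplete (Set.range b') ⟨b' 0, 0, rfl⟩
    ⟨0, by rintro _ ⟨n, rfl⟩; exact le_trans (hx'0 n) ((hb' n).1 ⟨n, le_rfl, rfl⟩)⟩
  have hvb : ∀ n, v ≤ b n := fun n => hv.1 ⟨n, rfl⟩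
  have hv'b : ∀ n, v' ≤ b' n := fun n => hv'.1 ⟨n, rfl⟩
  -- w ≤ b n + b' m
  have keyIneq : ∀ n m, w ≤ b n + b' m := by
    intro n m
    have h1 : x (max n m) ≤ b n := (hb n).1 ⟨max n m, le_max_left _ _, rfl⟩
    have h2 : w - x (max n m) ≤ b' m := (hb' m).1 ⟨max n m, le_max_right _ _, rfl⟩
    calc w = x (max n m) + (w - x (max n m)) := by abel
      _ ≤ b n + b' m := add_le_add h1 h2
  have hwv : ∀ m, w - b' m ≤ v := by
    intro m
    refine hv.2 ?_
    rintro _ ⟨n, rfl⟩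
    exact sub_le_iff_le_add.2 (keyIneq n m)
  have hwvv' : w ≤ v + v' := by
    have h : w - v ≤ v' := by
      refine hv'.2 ?_
      rintro _ ⟨m, rfl⟩
      exact sub_le_comm.1 (hwv m)
    have := sub_le_iff_le_add.1 h
    calc w ≤ v' + v := this
      _ = v + v' := by abel
  -- δ = v + v' - w is nonneg with φ δ = 0, hence zero
  set δ : E := v + v' - w with hδ
  have hδ0 : 0 ≤ δ := sub_nonneg.2 hwvv'
  have hδle : ∀ n, δ ≤ b n + b' n - w := fun n =>
    sub_le_sub_right (add_le_add (hvb n) (hv'b n)) w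
  have hφx' : ∀ n, φ (x' n) = φ w - φ (x n) := by
    intro n; rw [hx']; simp [map_sub]
  have hφδ : ∀ n, φ δ ≤ 4 * (2:ℝ)⁻¹ ^ n := by
    intro n
    have h1 := phi_mono φ hφpos (hδle n)
    have h1' : φ (b n + b' n - w) = φ (b n) + φ (b' n) - φ w := by rw [map_sub, map_add]
    have hδeq : φ δ = φ v + φ v' - φ w := by rw [hδ, map_sub, map_add]
    rw [h1'] at h1
    have h2 := est n
    have h3 := est' n
    rw [hφx' n] at h3
    linarith
  have hφδ0 : φ δ = 0 := by
    have hle : φ δ ≤ 0 := by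
      refine le_of_forall_pos_le_add ?_
      intro ε hε
      obtain ⟨n, hn⟩ := exists_pow_lt_of_lt_one (show (0:ℝ) < ε/4 by linarith)
        (show (2:ℝ)⁻¹ < 1 by norm_num)
      have := hφδ n
      linarith
    exact le_antisymm hle (hφpos δ hδ0)
  have hδz : δ = 0 := hφstrict δ (by rwa [abs_of_nonneg hδ0])
  have hvv' : v = w - v' := by
    have : v + v' = w := by
      have := hδz
      rw [hδ] at this
      exact sub_eq_zero.1 this
    rw [← this]; abel
  refine ⟨v, ?_⟩
  intro n
  have hup : x n - v ≤ b n + b' n - w := by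
    have h1 : x n ≤ b n := (hb n).1 ⟨n, le_rfl, rfl⟩
    have h2 : w - b' n ≤ v := hwv n
    calc x n - v ≤ b n - v := sub_le_sub_right h1 v
      _ ≤ b n - (w - b' n) := sub_le_sub_left h2 (b n)
      _ = b n + b' n - w := by abel
  have hdown : v - x n ≤ b n + b' n - w := by
    have h1 : v ≤ b n := hvb n
    have h2 : w - b' n ≤ x n := by
      have : w - x n ≤ b' n := (hb' n).1 ⟨n, le_rfl, rfl⟩
      exact sub_le_comm.1 this
    calc v - x n ≤ b n - x n := sub_le_sub_right h1 (x n)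
      _ ≤ b n - (w - b' n) := sub_le_sub_left h2 (b n)
      _ = b n + b' n - w := by abel
  have habs : |x n - v| ≤ b n + b' n - w := by
    have : |x n - v| = (x n - v) ⊔ -(x n - v) := rfl
    rw [this, neg_sub]
    exact sup_le hup hdown
  have h1 := phi_mono φ hφpos habs
  rw [map_sub, map_add] at h1
  have h2 := est n
  have h3 := est' n
  rw [hφx' n] at h3
  linarith

end Key

/-- Let `E` be an order complete vector lattice and `φ` a strictly positive order continuous
functional on `E`, and put `‖x‖_φ = φ(|x|)`.  Then the norm completion `Ẽ` of `(E, ‖·‖_φ)`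
(formalized as: any Banach lattice `F` in which `E` embeds as a norm-dense vector sublattice
via a `‖·‖_φ`-isometric lattice homomorphism `j`) is an AL-space in which the image of `E` is
an order dense ideal; moreover, if `E` is atomless then so is `Ẽ`. -/
theorem completion_wrt_strictly_positive_functional_is_AL
    {E : Type*} [Lattice E] [AddCommGroup E]
    [CovariantClass E E (· + ·) (· ≤ ·)] [Module ℝ E]
    (hsmul : ∀ (c : ℝ) (x : E), 0 ≤ c → 0 ≤ x → 0 ≤ c • x)
    -- `E` is order complete
    (hcomplete : ∀ A : Set E, A.Nonempty → BddAbove A → ∃ b, IsLUB A b)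
    (φ : E →ₗ[ℝ] ℝ)
    -- `φ` is positive and strictly positive
    (hφpos : ∀ x : E, 0 ≤ x → 0 ≤ φ x)
    (hφstrict : ∀ x : E, φ |x| = 0 → x = 0)
    -- `φ` is order continuous
    (hφcont : ∀ A : Set E, A.Nonempty → DirectedOn (· ≥ ·) A → IsGLB A 0 →
      ∀ ε : ℝ, 0 < ε → ∃ x ∈ A, |φ x| < ε)
    -- `F` is the norm completion of `(E, ‖·‖_φ)`, a Banach lattice in which `E` embeds
    -- densely via the lattice homomorphism `j` with `‖j x‖ = φ |x|`
    {F : Type*} [NormedAddCommGroup F] [Lattice F] [HasSolidNorm F]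
    [IsOrderedAddMonoid F] [NormedSpace ℝ F] [CompleteSpace F]
    (j : E →ₗ[ℝ] F)
    (hj_lat : ∀ x y : E, j (x ⊔ y) = j x ⊔ j y)
    (hj_iso : ∀ x : E, ‖j x‖ = φ |x|)
    (hj_dense : DenseRange j) :
    -- `F` is an AL-space
    (∀ u v : F, 0 ≤ u → 0 ≤ v → ‖u + v‖ = ‖u‖ + ‖v‖) ∧
    -- the image of `E` is an ideal of `F`
    (∀ (u : F) (x : E), |u| ≤ |j x| → ∃ y : E, j y = u) ∧
    -- the image of `E` is order dense in `F`
    (∀ u : F, 0 < u → ∃ x : E, 0 < j x ∧ j x ≤ u) ∧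
    -- if `E` is atomless then so is `F`
    ((∀ a : E, ¬ IsAtomVL a) → ∀ b : F, ¬ IsAtomVL b) := by
  haveI : IsOrderedAddMonoid E :=
    { add_le_add_left := fun a b h c => by rw [add_comm a, add_comm b]; exact CovariantClass.elim c h }
  have j0 : j (0 : E) = 0 := map_zero j
  have jmono : ∀ {p q : E}, p ≤ q → j p ≤ j q := by
    intro p q h
    have : j p ⊔ j q = j q := by rw [← hj_lat, sup_eq_right.2 h]
    exact sup_eq_right.1 this
  have jpos : ∀ {p : E}, 0 ≤ p → 0 ≤ j p := by
    intro p h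
    have := jmono h
    rwa [j0] at this
  have jposPart : ∀ p : E, j (p⁺) = (j p)⁺ := by
    intro p
    rw [posPart_def, posPart_def, hj_lat, j0]
  have jabs : ∀ p : E, j |p| = |j p| := by
    intro p
    show j (p ⊔ -p) = (j p) ⊔ -(j p)
    rw [hj_lat, map_neg]
  have jinf : ∀ p q : E, j (p ⊓ q) = j p ⊓ j q := by
    intro p q
    have h1 := congrArg j (inf_add_sup p q)
    rw [map_add, map_add, hj_lat] at h1
    have h2 := inf_add_sup (j p) (j q)
    have : j (p ⊓ q) + (j p ⊔ j q) = j p ⊓ j q + (j p ⊔ j q) := by rw [h1, h2]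
    exact add_right_cancel this
  have jinj : ∀ p : E, j p = 0 → p = 0 := by
    intro p h
    refine hφstrict p ?_
    rw [← hj_iso, h, norm_zero]
  have jnorm : ∀ p : E, 0 ≤ p → ‖j p‖ = φ p := by
    intro p hp
    rw [hj_iso, abs_of_nonneg hp]
  have snorm : ∀ a b : F, |a| ≤ |b| → ‖a‖ ≤ ‖b‖ := fun _ _ h => HasSolidNorm.solid h
  have pabsF : ∀ a : F, a⁺ ≤ |a| := fun a => by
    rw [posPart_def]; exact sup_le (le_abs_self a) (abs_nonneg a)
  have nabsF : ∀ a : F, a⁻ ≤ |a| := fun a => by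
    rw [negPart_def]; exact sup_le (neg_le_abs a) (abs_nonneg a)
  have posLip : ∀ a b : F, ‖a⁺ - b⁺‖ ≤ ‖a - b‖ := by
    intro a b
    refine snorm _ _ ?_
    rw [posPart_def, posPart_def]
    exact abs_sup_sub_sup_le_abs a b 0
  -- Part 1 : AL property
  have AL : ∀ u v : F, 0 ≤ u → 0 ≤ v → ‖u + v‖ = ‖u‖ + ‖v‖ := by
    intro u v hu hv
    have main : ∀ ε : ℝ, 0 < ε → |‖u + v‖ - (‖u‖ + ‖v‖)| ≤ 4 * ε := by
      intro ε hε
      obtain ⟨x, hx⟩ := hj_dense.exists_dist_lt u hε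
      obtain ⟨y, hy⟩ := hj_dense.exists_dist_lt v hε
      rw [dist_comm, dist_eq_norm] at hx hy
      set p := x⁺ with hp
      set q := y⁺ with hq
      have hup : ‖j p - u‖ < ε := by
        have e : j p - u = (j x)⁺ - u⁺ := by rw [hp, jposPart, posPart_of_nonneg hu]
        rw [e]
        exact lt_of_le_of_lt (posLip (j x) u) hx
      have hvq : ‖j q - v‖ < ε := by
        have e : j q - v = (j y)⁺ - v⁺ := by rw [hq, jposPart, posPart_of_nonneg hv]
        rw [e]
        exact lt_of_le_of_lt (posLip (j y) v) hy
      have hp0 : (0:E) ≤ p := posPart_nonneg x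
      have hq0 : (0:E) ≤ q := posPart_nonneg y
      have nsum : ‖j p + j q‖ = ‖j p‖ + ‖j q‖ := by
        rw [← map_add, jnorm _ (add_nonneg hp0 hq0), map_add, jnorm _ hp0, jnorm _ hq0]
      have t1 : |‖u‖ - ‖j p‖| ≤ ε := by
        refine le_of_lt (lt_of_le_of_lt ?_ hup)
        rw [← norm_neg (j p - u), neg_sub]
        exact abs_norm_sub_norm_le u (j p)
      have t2 : |‖v‖ - ‖j q‖| ≤ ε := by
        refine le_of_lt (lt_of_le_of_lt ?_ hvq)
        rw [← norm_neg (j q - v), neg_sub]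
        exact abs_norm_sub_norm_le v (j q)
      have t3 : |‖u + v‖ - ‖j p + j q‖| ≤ 2 * ε := by
        refine le_trans (abs_norm_sub_norm_le (u+v) (j p + j q)) ?_
        have e : (u + v) - (j p + j q) = -(j p - u) + -(j q - v) := by abel
        rw [e]
        calc ‖-(j p - u) + -(j q - v)‖ ≤ ‖-(j p - u)‖ + ‖-(j q - v)‖ := norm_add_le _ _
          _ = ‖j p - u‖ + ‖j q - v‖ := by rw [norm_neg, norm_neg]
          _ ≤ 2 * ε := by linarith
      rw [abs_le] at t1 t2 t3 ⊢
      constructor <;> [skip; skip] <;>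
        · obtain ⟨t1a, t1b⟩ := t1
          obtain ⟨t2a, t2b⟩ := t2
          obtain ⟨t3a, t3b⟩ := t3
          rw [nsum] at t3a t3b
          linarith
    have : |‖u + v‖ - (‖u‖ + ‖v‖)| ≤ 0 := by
      refine le_of_forall_pos_le_add ?_
      intro ε hε
      have := main (ε/4) (by linarith)
      linarith
    have h0 := abs_nonneg (‖u + v‖ - (‖u‖ + ‖v‖))
    have : ‖u + v‖ - (‖u‖ + ‖v‖) = 0 := by
      rw [← abs_eq_zero]; linarith
    linarith
  -- Part 2 : ideal property
  have C : ∀ (w : E), 0 ≤ w → ∀ u : F, 0 ≤ u → u ≤ j w → ∃ y : E, j y = u := by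
    intro w hw u hu huw
    have hz : ∀ n : ℕ, ∃ z : E, ‖j z - u‖ < (2:ℝ)⁻¹ ^ (n+2) := by
      intro n
      obtain ⟨z, hz⟩ := hj_dense.exists_dist_lt u (ε := (2:ℝ)⁻¹ ^ (n+2)) (by positivity)
      exact ⟨z, by rwa [dist_comm, dist_eq_norm] at hz⟩
    choose z hzu using hz
    set x : ℕ → E := fun n => (z n ⊔ 0) ⊓ w with hxdef
    have hx0 : ∀ n, 0 ≤ x n := fun n => le_inf (le_sup_right) hw
    have hxw : ∀ n, x n ≤ w := fun n => inf_le_right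
    have hjx : ∀ n, ‖j (x n) - u‖ < (2:ℝ)⁻¹ ^ (n+2) := by
      intro n
      have e : j (x n) = ((j (z n)) ⊔ 0) ⊓ j w := by
        rw [hxdef]
        show j ((z n ⊔ 0) ⊓ w) = _
        rw [jinf, hj_lat, j0]
      have eu : u = (u ⊔ 0) ⊓ j w := by rw [sup_eq_left.2 hu, inf_eq_left.2 huw]
      calc ‖j (x n) - u‖ = ‖(j (z n) ⊔ 0) ⊓ j w - (u ⊔ 0) ⊓ j w‖ := by rw [e]; nth_rewrite 1 [eu]; rfl
        _ ≤ ‖(j (z n) ⊔ 0) - (u ⊔ 0)‖ := snorm _ _ (abs_inf_sub_inf_le_abs _ _ _)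
        _ ≤ ‖j (z n) - u‖ := snorm _ _ (abs_sup_sub_sup_le_abs _ _ 0)
        _ < _ := hzu n
    have hc : ∀ n, φ |x (n+1) - x n| ≤ (2:ℝ)⁻¹ ^ n := by
      intro n
      rw [← hj_iso, map_sub]
      have tri : ‖j (x (n+1)) - j (x n)‖ ≤ ‖j (x (n+1)) - u‖ + ‖j (x n) - u‖ := by
        have e : j (x (n+1)) - j (x n) = (j (x (n+1)) - u) + -(j (x n) - u) := by abel
        rw [e]
        calc ‖(j (x (n+1)) - u) + -(j (x n) - u)‖
            ≤ ‖j (x (n+1)) - u‖ + ‖-(j (x n) - u)‖ := norm_add_le _ _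
          _ = _ := by rw [norm_neg]
      have b1 := hjx (n+1)
      have b2 := hjx n
      have e1 : (2:ℝ)⁻¹ ^ (n+1+2) = (2:ℝ)⁻¹ ^ n * (2:ℝ)⁻¹ ^ 3 := by rw [← pow_add]
      have e2 : (2:ℝ)⁻¹ ^ (n+2) = (2:ℝ)⁻¹ ^ n * (2:ℝ)⁻¹ ^ 2 := by rw [← pow_add]
      have hpow : (0:ℝ) ≤ (2:ℝ)⁻¹ ^ n := by positivity
      rw [e1] at b1
      rw [e2] at b2
      norm_num at b1 b2
      linarith
    obtain ⟨v, hv⟩ := key_convergence hcomplete φ hφpos hφstrict hφcont w x hx0 hxw hc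
    refine ⟨v, ?_⟩
    have hbound : ∀ n : ℕ, ‖j v - u‖ ≤ 4 * (2:ℝ)⁻¹ ^ n + (2:ℝ)⁻¹ ^ (n+2) := by
      intro n
      have tri : ‖j v - u‖ ≤ ‖j v - j (x n)‖ + ‖j (x n) - u‖ := by
        have e : j v - u = (j v - j (x n)) + (j (x n) - u) := by abel
        rw [e]
        exact norm_add_le _ _
      have e1 : ‖j v - j (x n)‖ = φ |x n - v| := by
        rw [← map_sub, hj_iso, abs_sub_comm]
      have := hv n
      have := (hjx n).le
      rw [e1] at tri
      linarith
    have hzero : ‖j v - u‖ ≤ 0 := by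
      refine le_of_forall_pos_le_add ?_
      intro ε hε
      obtain ⟨n, hn⟩ := exists_pow_lt_of_lt_one (show (0:ℝ) < ε/5 by linarith)
        (show (2:ℝ)⁻¹ < 1 by norm_num)
      have hb := hbound n
      have e2 : (2:ℝ)⁻¹ ^ (n+2) ≤ (2:ℝ)⁻¹ ^ n :=
        pow_le_pow_of_le_one (by norm_num) (by norm_num) (by omega)
      linarith
    have : j v - u = 0 := by
      rw [← norm_le_zero_iff]
      exact hzero
    exact sub_eq_zero.1 this
  have ideal : ∀ (u : F) (x : E), |u| ≤ |j x| → ∃ y : E, j y = u := by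
    intro u x h
    have hjw : j |x| = |j x| := jabs x
    have h1 : ∃ y1, j y1 = u⁺ :=
      C |x| (abs_nonneg x) u⁺ (posPart_nonneg u) (by rw [hjw]; exact (pabsF u).trans h)
    have h2 : ∃ y2, j y2 = u⁻ :=
      C |x| (abs_nonneg x) u⁻ (negPart_nonneg u) (by rw [hjw]; exact (nabsF u).trans h)
    obtain ⟨y1, hy1⟩ := h1
    obtain ⟨y2, hy2⟩ := h2
    exact ⟨y1 - y2, by rw [map_sub, hy1, hy2, posPart_sub_negPart]⟩
  -- Part 3 : order density
  have dense_ord : ∀ u : F, 0 < u → ∃ x : E, 0 < j x ∧ j x ≤ u := by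
    intro u hu
    have hnu : 0 < ‖u‖ := norm_pos_iff.2 (ne_of_gt hu)
    obtain ⟨x, hx⟩ := hj_dense.exists_dist_lt u hnu
    rw [dist_comm, dist_eq_norm] at hx
    set v : F := (j x)⁺ ⊓ u with hvdef
    have hv0 : 0 ≤ v := le_inf (posPart_nonneg _) hu.le
    have hvu : v ≤ u := inf_le_right
    have hvr : ∃ y, j y = v := by
      refine ideal v x⁺ ?_
      have e1 : |v| = v := abs_of_nonneg hv0
      have e2 : |j x⁺| = (j x)⁺ := by
        rw [jposPart, abs_of_nonneg (posPart_nonneg (j x))]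
      rw [e1, e2]
      exact inf_le_left
    have huv : ‖u - v‖ < ‖u‖ := by
      have e : u - v = (u - (j x)⁺)⁺ := by
        rw [hvdef, inf_comm, inf_eq_sub_posPart_sub]
        abel
      have hle : ‖u - v‖ ≤ ‖u - j x‖ := by
        refine snorm _ _ ?_
        rw [e, abs_of_nonneg (posPart_nonneg _)]
        calc (u - (j x)⁺)⁺ ≤ |u - (j x)⁺| := pabsF _
          _ = |u⁺ - (j x)⁺| := by rw [posPart_of_nonneg hu.le]
          _ ≤ |u - j x| := by
              rw [posPart_def, posPart_def]
              exact abs_sup_sub_sup_le_abs u (j x) 0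
      calc ‖u - v‖ ≤ ‖u - j x‖ := hle
        _ = ‖j x - u‖ := by rw [← norm_neg, neg_sub]
        _ < ‖u‖ := hx
    have hvne : v ≠ 0 := by
      intro h
      rw [h, sub_zero] at huv
      exact lt_irrefl _ huv
    obtain ⟨y, hy⟩ := hvr
    exact ⟨y, by rw [hy]; exact lt_of_le_of_ne hv0 (Ne.symm hvne), hy ▸ hvu⟩
  -- Part 4 : atomless
  refine ⟨AL, ideal, dense_ord, ?_⟩
  intro hE b hb
  obtain ⟨hb0, hbatom⟩ := hb
  obtain ⟨x, hx0, hxb⟩ := dense_ord b hb0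
  have hjx : j x⁺ = j x := by
    rw [jposPart, posPart_of_nonneg hx0.le]
  refine hE x⁺ ⟨?_, ?_⟩
  · refine lt_of_le_of_ne (posPart_nonneg x) ?_
    intro hcon
    apply ne_of_gt hx0
    rw [← hjx, ← hcon, j0]
  · intro y1 y2 h1 h2 h1x h2x hdisj
    have k1 : j y1 ≤ b := le_trans (hjx ▸ jmono h1x) hxb
    have k2 : j y2 ≤ b := le_trans (hjx ▸ jmono h2x) hxb
    rcases hbatom (j y1) (j y2) (jpos h1) (jpos h2) k1 k2
        (by rw [← jinf, hdisj, j0]) with h | h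
    · exact Or.inl (jinj _ h)
    · exact Or.inr (jinj _ h)
end

section
/- Let E be an order complete vector lattice and 𝒫_C the diagonal projection with respect to a band C. Then for all positive regular operators A, B on E, 𝒫_C(AB) ≥ 𝒫_C(A) 𝒫_C(B); in particular 𝒫_C(Tⁿ) ≥ (𝒫_C(T))ⁿ for every positive regular operator T and all n ≥ 1. -/
/-- A positive operator on an ordered vector space. -/
def PositiveOp {E : Type*} [Lattice E] [AddCommGroup E] [Module ℝ E]
    (T : E →ₗ[ℝ] E) : Prop :=
  ∀ x : E, 0 ≤ x → 0 ≤ T x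

/-- A band (order) projection: an idempotent operator `P` with `0 ≤ P ≤ I`. -/
def IsBandProj {E : Type*} [Lattice E] [AddCommGroup E] [Module ℝ E]
    (P : E →ₗ[ℝ] E) : Prop :=
  P ∘ₗ P = P ∧ ∀ x : E, 0 ≤ x → 0 ≤ P x ∧ P x ≤ x

/-- A regular operator: a difference of two positive operators. -/
def IsRegularOp {E : Type*} [Lattice E] [AddCommGroup E] [Module ℝ E]
    (T : E →ₗ[ℝ] E) : Prop :=
  ∃ T₁ T₂ : E →ₗ[ℝ] E, PositiveOp T₁ ∧ PositiveOp T₂ ∧ T = T₁ - T₂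

/-- `D` is the diagonal of the positive operator `T` with respect to the band (given by the
band projection `P`): Schep's formula, `D x` is the infimum of `∑ Qᵢ T Qᵢ x` over all finite
systems of band projections `Qᵢ ≤ P` summing to `P`.  For `P = I` this is the band projection
of `T` onto the orthomorphisms `Orth(E)`; in general it is the diagonal of `P T P` in `B`. -/
def IsDiagonalWRT {E : Type*} [Lattice E] [AddCommGroup E] [Module ℝ E]
    (P T D : E →ₗ[ℝ] E) : Prop :=
  ∀ x : E, 0 ≤ x → IsGLB
    {y : E | ∃ (n : ℕ) (Q : Fin n → E →ₗ[ℝ] E),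
        (∀ i, IsBandProj (Q i) ∧ Q i ∘ₗ P = Q i ∧ P ∘ₗ Q i = Q i) ∧
        (∑ i, Q i) = P ∧ y = ∑ i, Q i (T (Q i x))} (D x)

/-- `D` is the diagonal of the regular operator `T` with respect to the band projection `P`,
obtained by extending the diagonal from positive operators by linearity. -/
def IsDiagonalOf {E : Type*} [Lattice E] [AddCommGroup E] [Module ℝ E]
    (P T D : E →ₗ[ℝ] E) : Prop :=
  ∃ T₁ T₂ D₁ D₂ : E →ₗ[ℝ] E, PositiveOp T₁ ∧ PositiveOp T₂ ∧
    T = T₁ - T₂ ∧ D = D₁ - D₂ ∧ IsDiagonalWRT P T₁ D₁ ∧ IsDiagonalWRT P T₂ D₂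

section Aux

variable {E : Type*} [Lattice E] [AddCommGroup E]
  [CovariantClass E E (· + ·) (· ≤ ·)] [Module ℝ E]

private lemma PositiveOp.mono {T : E →ₗ[ℝ] E} (hT : PositiveOp T) {u v : E} (h : u ≤ v) :
    T u ≤ T v := by
  have h2 := hT (v - u) (sub_nonneg.mpr h)
  rw [map_sub, sub_nonneg] at h2
  exact h2

local instance : IsOrderedAddMonoid E :=
  { add_le_add_left := fun a b h c => by
      rw [add_comm a c, add_comm b c]; exact CovariantClass.elim c h }

/-- Key lemma: if `Q` is a band projection below `P`, then `Q (D x) ≤ Q T Q x` for `x ≥ 0`,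
by refining any partition through `{Q, P - Q}`. -/
private lemma keylem {P T D Q : E →ₗ[ℝ] E} (hP : IsBandProj P) (hD : IsDiagonalWRT P T D)
    (hQ : IsBandProj Q) (hQP : Q ∘ₗ P = Q) (hPQ : P ∘ₗ Q = Q)
    {x : E} (hx : 0 ≤ x) : Q (D x) ≤ Q (T (Q x)) := by
  have hQQ : ∀ z, Q (Q z) = Q z := fun z => by
    conv_lhs => rw [← LinearMap.comp_apply, hQ.1]
  have hQPap : ∀ z, Q (P z) = Q z := fun z => by
    conv_lhs => rw [← LinearMap.comp_apply, hQP]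
  have hPQap : ∀ z, P (Q z) = Q z := fun z => by
    conv_lhs => rw [← LinearMap.comp_apply, hPQ]
  -- `P - Q` is a band projection below `P`
  have hRid : (P - Q) ∘ₗ (P - Q) = P - Q := by
    rw [LinearMap.sub_comp, LinearMap.comp_sub, LinearMap.comp_sub, hP.1, hQ.1, hQP, hPQ]
    abel
  have hR : IsBandProj (P - Q) := by
    refine ⟨hRid, fun y hy => ?_⟩
    have hPy := hP.2 y hy
    have hQy0 : 0 ≤ Q y := (hQ.2 y hy).1
    have hQyP : Q y ≤ P y := by
      have := (hQ.2 (P y) hPy.1).2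
      rwa [hQPap y] at this
    constructor
    · simpa [LinearMap.sub_apply] using sub_nonneg.mpr hQyP
    · have h1 : P y - Q y ≤ P y := sub_le_self _ hQy0
      simpa [LinearMap.sub_apply] using h1.trans hPy.2
  have hRP : (P - Q) ∘ₗ P = P - Q := by
    rw [LinearMap.sub_comp, hP.1, hQP]
  have hPR : P ∘ₗ (P - Q) = P - Q := by
    rw [LinearMap.comp_sub, hP.1, hPQ]
  -- the element given by the partition `{Q, P - Q}`
  have hmem : Q (T (Q x)) + (P - Q) (T ((P - Q) x)) ∈
      {y : E | ∃ (n : ℕ) (Q' : Fin n → E →ₗ[ℝ] E),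
        (∀ i, IsBandProj (Q' i) ∧ Q' i ∘ₗ P = Q' i ∧ P ∘ₗ Q' i = Q' i) ∧
        (∑ i, Q' i) = P ∧ y = ∑ i, Q' i (T (Q' i x))} := by
    refine ⟨2, ![Q, P - Q], ?_, ?_, ?_⟩
    · intro i
      fin_cases i
      · exact ⟨hQ, hQP, hPQ⟩
      · exact ⟨hR, hRP, hPR⟩
    · rw [Fin.sum_univ_two]
      simp only [Matrix.cons_val_zero, Matrix.cons_val_one, Matrix.head_cons]
      abel
    · rw [Fin.sum_univ_two]
      simp only [Matrix.cons_val_zero, Matrix.cons_val_one, Matrix.head_cons]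
  have h1 : D x ≤ Q (T (Q x)) + (P - Q) (T ((P - Q) x)) := (hD x hx).1 hmem
  have hQpos : PositiveOp Q := fun y hy => (hQ.2 y hy).1
  have h2 := hQpos.mono h1
  have hzero : ∀ z, Q ((P - Q) z) = 0 := fun z => by
    rw [LinearMap.sub_apply, map_sub, hQPap, hQQ, sub_self]
  calc Q (D x) ≤ Q (Q (T (Q x)) + (P - Q) (T ((P - Q) x))) := h2
    _ = Q (T (Q x)) := by rw [map_add, hzero, hQQ, add_zero]

private lemma Dpos {P T D : E →ₗ[ℝ] E} (hT : PositiveOp T) (hD : IsDiagonalWRT P T D)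
    {x : E} (hx : 0 ≤ x) : 0 ≤ D x := by
  refine (hD x hx).2 ?_
  rintro s ⟨n, Q, hQ, -, rfl⟩
  exact Finset.sum_nonneg fun i _ => ((hQ i).1.2 _ (hT _ ((hQ i).1.2 x hx).1)).1

/-- `D x` lies in the band (range of `P`) for `x ≥ 0`. -/
private lemma DinC {P T D : E →ₗ[ℝ] E} (hP : IsBandProj P) (hD : IsDiagonalWRT P T D)
    {x : E} (hx : 0 ≤ x) : P (D x) = D x := by
  have hglb := hD x hx
  have hPP : ∀ z, P (P z) = P z := fun z => by
    conv_lhs => rw [← LinearMap.comp_apply, hP.1]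
  have hPpos : PositiveOp P := fun y hy => (hP.2 y hy).1
  have hmem0 : P (T (P x)) ∈
      {y : E | ∃ (n : ℕ) (Q' : Fin n → E →ₗ[ℝ] E),
        (∀ i, IsBandProj (Q' i) ∧ Q' i ∘ₗ P = Q' i ∧ P ∘ₗ Q' i = Q' i) ∧
        (∑ i, Q' i) = P ∧ y = ∑ i, Q' i (T (Q' i x))} := by
    refine ⟨1, fun _ => P, fun i => ⟨hP, hP.1, hP.1⟩, by simp, by simp⟩
  have hle : D x ≤ P (T (P x)) := hglb.1 hmem0
  -- `P (D x) ≤ D x`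
  have hlb : P (D x) ∈ lowerBounds
      {y : E | ∃ (n : ℕ) (Q' : Fin n → E →ₗ[ℝ] E),
        (∀ i, IsBandProj (Q' i) ∧ Q' i ∘ₗ P = Q' i ∧ P ∘ₗ Q' i = Q' i) ∧
        (∑ i, Q' i) = P ∧ y = ∑ i, Q' i (T (Q' i x))} := by
    rintro s ⟨n, Q, hQ, hsum, rfl⟩
    have hDs : D x ≤ ∑ i, Q i (T (Q i x)) := hglb.1 ⟨n, Q, hQ, hsum, rfl⟩
    have := hPpos.mono hDs
    calc P (D x) ≤ P (∑ i, Q i (T (Q i x))) := this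
      _ = ∑ i, Q i (T (Q i x)) := by
          rw [map_sum]
          refine Finset.sum_congr rfl fun i _ => ?_
          conv_lhs => rw [← LinearMap.comp_apply, (hQ i).2.2]
  have h1 : P (D x) ≤ D x := hglb.2 hlb
  -- `D x ≤ P (D x)`
  have h2 := (hP.2 (P (T (P x)) - D x) (sub_nonneg.mpr hle)).2
  rw [map_sub, hPP] at h2
  have h3 : D x ≤ P (D x) := (sub_le_sub_iff_left _).mp h2
  exact le_antisymm h1 h3

private lemma part1core {P A B DA DB DAB : E →ₗ[ℝ] E} (hP : IsBandProj P)
    (hA : PositiveOp A) (hB : PositiveOp B)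
    (hDA : IsDiagonalWRT P A DA) (hDB : IsDiagonalWRT P B DB)
    (hDAB : IsDiagonalWRT P (A ∘ₗ B) DAB) {x : E} (hx : 0 ≤ x) :
    DA (DB x) ≤ DAB x := by
  have hDBx : 0 ≤ DB x := Dpos hB hDB hx
  refine (hDAB x hx).2 ?_
  rintro s ⟨n, Q, hQ, hsum, rfl⟩
  have h1 : DA (DB x) ≤ ∑ i, Q i (A (Q i (DB x))) :=
    (hDA (DB x) hDBx).1 ⟨n, Q, hQ, hsum, rfl⟩
  refine h1.trans (Finset.sum_le_sum fun i _ => ?_)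
  obtain ⟨hQi, hQiP, hPQi⟩ := hQ i
  have hQpos : PositiveOp (Q i) := fun y hy => (hQi.2 y hy).1
  have hQix : 0 ≤ Q i x := hQpos x hx
  have hz : 0 ≤ B (Q i x) := hB _ hQix
  have step1 : Q i (DB x) ≤ Q i (B (Q i x)) := keylem hP hDB hQi hQiP hPQi hx
  have step2 : Q i (B (Q i x)) ≤ B (Q i x) := (hQi.2 _ hz).2
  calc Q i (A (Q i (DB x))) ≤ Q i (A (Q i (B (Q i x)))) := hQpos.mono (hA.mono step1)
    _ ≤ Q i (A (B (Q i x))) := hQpos.mono (hA.mono step2)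
    _ = Q i ((A ∘ₗ B) (Q i x)) := rfl

private lemma powpos {D : E →ₗ[ℝ] E} (hD : PositiveOp D) : ∀ n, PositiveOp (D ^ n)
  | 0 => fun x hx => by simpa using hx
  | n + 1 => fun x hx => by
      rw [pow_succ']
      exact hD _ (powpos hD n x hx)

private lemma keylemN {P T D : E →ₗ[ℝ] E} (hP : IsBandProj P) (hT : PositiveOp T)
    (hD : IsDiagonalWRT P T D) {Q : E →ₗ[ℝ] E} (hQ : IsBandProj Q)
    (hQP : Q ∘ₗ P = Q) (hPQ : P ∘ₗ Q = Q) (n : ℕ) {x : E} (hx : 0 ≤ x) :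
    Q ((D ^ n) x) ≤ Q ((T ^ n) (Q x)) := by
  induction n with
  | zero =>
    have : Q (Q x) = Q x := by conv_lhs => rw [← LinearMap.comp_apply, hQ.1]
    simp [this]
  | succ n ih =>
    have hDpos : PositiveOp D := fun y hy => Dpos hT hD hy
    have hQpos : PositiveOp Q := fun y hy => (hQ.2 y hy).1
    have hDnx : 0 ≤ (D ^ n) x := powpos hDpos n x hx
    have h1 : Q (D ((D ^ n) x)) ≤ Q (T (Q ((D ^ n) x))) := keylem hP hD hQ hQP hPQ hDnx
    have h3 : Q (T (Q ((D ^ n) x))) ≤ Q (T (Q ((T ^ n) (Q x)))) := hQpos.mono (hT.mono ih)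
    have hTnQx : 0 ≤ (T ^ n) (Q x) := powpos hT n _ (hQpos x hx)
    have h4 : Q ((T ^ n) (Q x)) ≤ (T ^ n) (Q x) := (hQ.2 _ hTnQx).2
    have h5 : Q (T (Q ((T ^ n) (Q x)))) ≤ Q (T ((T ^ n) (Q x))) := hQpos.mono (hT.mono h4)
    calc Q ((D ^ (n + 1)) x) = Q (D ((D ^ n) x)) := by rw [pow_succ']; rfl
      _ ≤ Q (T ((T ^ n) (Q x))) := le_trans h1 (le_trans h3 h5)
      _ = Q ((T ^ (n + 1)) (Q x)) := by rw [pow_succ']; rfl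

private lemma part2core {P T DT DTn : E →ₗ[ℝ] E} (hP : IsBandProj P) (hT : PositiveOp T)
    (hDT : IsDiagonalWRT P T DT) {n : ℕ} (hn : 1 ≤ n)
    (hDTn : IsDiagonalWRT P (T ^ n) DTn) {x : E} (hx : 0 ≤ x) :
    (DT ^ n) x ≤ DTn x := by
  have hDpos : PositiveOp DT := fun y hy => Dpos hT hDT hy
  obtain ⟨m, rfl⟩ : ∃ m, n = m + 1 := ⟨n - 1, (Nat.succ_pred_eq_of_pos hn).symm⟩
  have hDmx : 0 ≤ (DT ^ m) x := powpos hDpos m x hx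
  have hPD : P ((DT ^ (m + 1)) x) = (DT ^ (m + 1)) x := by
    have he : (DT ^ (m + 1)) x = DT ((DT ^ m) x) := by rw [pow_succ']; rfl
    rw [he]
    exact DinC hP hDT hDmx
  refine (hDTn x hx).2 ?_
  rintro s ⟨k, Q, hQ, hsum, rfl⟩
  have he2 : (DT ^ (m + 1)) x = ∑ i, Q i ((DT ^ (m + 1)) x) := by
    rw [← LinearMap.sum_apply, hsum, hPD]
  rw [he2]
  exact Finset.sum_le_sum fun i _ =>
    keylemN hP hT hDT (hQ i).1 (hQ i).2.1 (hQ i).2.2 (m + 1) hx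

end Aux

/-- The diagonal projection `𝒫_C` with respect to a band `C` (with band projection `P_C`) of
an order complete vector lattice is supermultiplicative on positive operators:
`𝒫_C(AB) ≥ 𝒫_C(A) 𝒫_C(B)`; in particular `𝒫_C(Tⁿ) ≥ (𝒫_C(T))ⁿ` for every positive
regular operator `T` and all `n ≥ 1`. -/
theorem diagonal_supermultiplicative
    {E : Type*} [Lattice E] [AddCommGroup E]
    [CovariantClass E E (· + ·) (· ≤ ·)] [Module ℝ E]
    (hsmul : ∀ (c : ℝ) (x : E), 0 ≤ c → 0 ≤ x → 0 ≤ c • x)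
    -- `E` is order complete
    (hcomplete : ∀ A : Set E, A.Nonempty → BddAbove A → ∃ b, IsLUB A b)
    (PC : E →ₗ[ℝ] E) (hPC : IsBandProj PC) :
    (∀ A B DA DB DAB : E →ₗ[ℝ] E, PositiveOp A → PositiveOp B →
      IsDiagonalWRT PC A DA → IsDiagonalWRT PC B DB → IsDiagonalWRT PC (A ∘ₗ B) DAB →
      PositiveOp (DAB - DA ∘ₗ DB)) ∧
    (∀ (T DT DTn : E →ₗ[ℝ] E) (n : ℕ), 1 ≤ n → PositiveOp T →
      IsDiagonalWRT PC T DT → IsDiagonalWRT PC (T ^ n) DTn →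
      PositiveOp (DTn - DT ^ n)) := by
  constructor
  · intro A B DA DB DAB hA hB hDA hDB hDAB x hx
    exact sub_nonneg.mpr (part1core hPC hA hB hDA hDB hDAB hx)
  · intro T DT DTn n hn hT hDT hDTn x hx
    exact sub_nonneg.mpr (part2core hPC hT hDT hn hDTn hx)
end
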